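/- arXiv:1506.04445 — 2 statements merged into one kernel-verified Lean document; each statement's English description precedes it below -/
import Mathlib

section
/- If μ₀ ∈ ℝ, u₀ is a Schwartz eigenfunction of the PT-symmetric Schrödinger operator L with eigenvalue μ₀ (i.e. u₀'' + V·u₀ = -μ₀·u₀), and there exists a Schwartz generalized eigenfunction u_g satisfying u_g'' + V·u_g + μ₀·u_g = u₀, then ⟨u₀, u₀⟩_PT = 0. -/
open MeasureTheory Complex

/-- The PT-product `⟨f,g⟩_PT = ∫_ℝ conj(f(-x))·g(x) dx`. -/
noncomputable def PTprod (f g : ℝ → ℂ) : ℂ :=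
  ∫ x : ℝ, (starRingEnd ℂ) (f (-x)) * g x

/-!
The Schrödinger operator `L = ∂² + W` with bounded measurable PT-symmetric `W` is symmetric for
the PT-product on Schwartz functions: `∂` is, by integration by parts, because the reflection
`x ↦ -x` in the PT-conjugate reverses the sign of the derivative, and multiplication by `W` is,
pointwise. With `W = V + μ₀` we have `L u₀ = 0` and `L u_g = u₀`, hence
`⟨u₀, u₀⟩_PT = ⟨u₀, L u_g⟩_PT = ⟨L u₀, u_g⟩_PT = 0`.
-/

open ComplexConjugate

namespace SchwartzMap

noncomputable def ptReflect (f : 𝓢(ℝ, ℂ)) : 𝓢(ℝ, ℂ) :=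
  postcompCLM conjCLE.toContinuousLinearMap
    (compCLMOfContinuousLinearEquiv ℝ (ContinuousLinearEquiv.neg ℝ) f)

@[simp]
theorem ptReflect_apply (f : 𝓢(ℝ, ℂ)) (x : ℝ) : ptReflect f x = conj (f (-x)) :=
  rfl

theorem hasDerivAt_ptReflect (f : 𝓢(ℝ, ℂ)) (x : ℝ) :
    HasDerivAt (ptReflect f) (-ptReflect (derivCLM ℝ ℂ f) x) x := by
  have := ((f.hasDerivAt (-x)).scomp x (hasDerivAt_neg x)).star
  simp only [neg_one_smul, star_neg] at this
  exact this

theorem integrable_bdd_mul (f : 𝓢(ℝ, ℂ)) {V : ℝ → ℂ} (hV : AEStronglyMeasurable V)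
    (hVbdd : ∃ C : ℝ, ∀ x : ℝ, ‖V x‖ ≤ C) : Integrable (fun x => V x * f x) :=
  f.integrable.bdd_mul hV (ae_of_all _ hVbdd.choose_spec)

end SchwartzMap

open SchwartzMap

theorem PTprod_eq_integral_ptReflect_mul (f : 𝓢(ℝ, ℂ)) (g : ℝ → ℂ) :
    PTprod f g = ∫ x, ptReflect f x * g x :=
  rfl

theorem conj_PTprod (f g : ℝ → ℂ) : conj (PTprod f g) = PTprod g f := by
  rw [PTprod, ← integral_conj, ← integral_neg_eq_self _ volume]
  simp [PTprod, mul_comm]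

theorem PTprod_add_right (f : 𝓢(ℝ, ℂ)) {g₁ g₂ : ℝ → ℂ} (hg₁ : Integrable g₁)
    (hg₂ : Integrable g₂) :
    PTprod f (fun x => g₁ x + g₂ x) = PTprod f g₁ + PTprod f g₂ := by
  simp only [PTprod_eq_integral_ptReflect_mul, mul_add]
  exact integral_add (hg₁.mul_of_top_right (ptReflect f).memLp_top)
    (hg₂.mul_of_top_right (ptReflect f).memLp_top)

theorem PTprod_add_left (g : 𝓢(ℝ, ℂ)) {f₁ f₂ : ℝ → ℂ} (hf₁ : Integrable f₁)
    (hf₂ : Integrable f₂) :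
    PTprod (fun x => f₁ x + f₂ x) g = PTprod f₁ g + PTprod f₂ g := by
  rw [← conj_PTprod, PTprod_add_right g hf₁ hf₂, map_add, conj_PTprod, conj_PTprod]

theorem PTprod_deriv_right_eq_left (f g : 𝓢(ℝ, ℂ)) :
    PTprod f (deriv g) = PTprod (deriv f) g := by
  rw [PTprod_eq_integral_ptReflect_mul, integral_mul_deriv_eq_neg_deriv_mul, PTprod,
    ← integral_neg]
  simp [(hasDerivAt_ptReflect f _).deriv]

theorem PTprod_deriv_deriv_right_eq_left (f g : 𝓢(ℝ, ℂ)) :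
    PTprod f (deriv (deriv g)) = PTprod (deriv (deriv f)) g :=
  (PTprod_deriv_right_eq_left f (derivCLM ℝ ℂ g)).trans
    (PTprod_deriv_right_eq_left (derivCLM ℝ ℂ f) g)

theorem PTprod_mul_right_eq_left {V : ℝ → ℂ} (hVPT : ∀ x : ℝ, conj (V (-x)) = V x)
    (f g : ℝ → ℂ) : PTprod f (fun x => V x * g x) = PTprod (fun x => V x * f x) g := by
  simp only [PTprod, map_mul, hVPT, mul_left_comm, mul_assoc]

theorem PTprod_schrodinger_right_eq_left {V : ℝ → ℂ} (hV : AEStronglyMeasurable V)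
    (hVbdd : ∃ C : ℝ, ∀ x : ℝ, ‖V x‖ ≤ C) (hVPT : ∀ x : ℝ, conj (V (-x)) = V x)
    (f g : 𝓢(ℝ, ℂ)) :
    PTprod f (fun x => deriv (deriv g) x + V x * g x) =
      PTprod (fun x => deriv (deriv f) x + V x * f x) g := by
  have hf'' : Integrable (deriv (deriv f)) := (derivCLM ℝ ℂ (derivCLM ℝ ℂ f)).integrable
  have hg'' : Integrable (deriv (deriv g)) := (derivCLM ℝ ℂ (derivCLM ℝ ℂ g)).integrable
  rw [PTprod_add_right f hg'' (g.integrable_bdd_mul hV hVbdd),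
    PTprod_add_left g hf'' (f.integrable_bdd_mul hV hVbdd),
    PTprod_deriv_deriv_right_eq_left, PTprod_mul_right_eq_left hVPT]

/-- At a non-diagonal Jordan block (exceptional point): if `u₀` is an eigenfunction of
the PT-symmetric Schrödinger operator with real eigenvalue `μ₀` which possesses a
generalized eigenfunction `u_g`, then `⟨u₀,u₀⟩_PT = 0`. -/
theorem PT_selfproduct_exceptional_point (V : ℝ → ℂ) (hVcont : Continuous V)
    (hVbdd : ∃ C : ℝ, ∀ x : ℝ, ‖V x‖ ≤ C)
    (hVPT : ∀ x : ℝ, (starRingEnd ℂ) (V (-x)) = V x)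
    (μ₀ : ℝ) (u₀ : SchwartzMap ℝ ℂ)
    (hu₀ : ∀ x : ℝ, deriv (deriv u₀) x + V x * u₀ x = -(μ₀ : ℂ) * u₀ x)
    (hg : ∃ ug : SchwartzMap ℝ ℂ,
      ∀ x : ℝ, deriv (deriv ug) x + V x * ug x + (μ₀ : ℂ) * ug x = u₀ x) :
    PTprod (fun x => u₀ x) (fun x => u₀ x) = 0 := by
  obtain ⟨ug, hug⟩ := hg
  obtain ⟨C, hC⟩ := hVbdd
  set W : ℝ → ℂ := fun x => V x + μ₀
  have hW_bdd : ∃ C : ℝ, ∀ x : ℝ, ‖W x‖ ≤ C :=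
    ⟨C + |μ₀|, fun x => (norm_add_le _ _).trans (by simpa using hC x)⟩
  have hW_PT : ∀ x : ℝ, conj (W (-x)) = W x := by
    simp only [W, map_add, hVPT, conj_ofReal, implies_true]
  have hLu₀ : (fun x => deriv (deriv u₀) x + W x * u₀ x) = 0 :=
    funext fun x => by simp only [W, Pi.zero_apply]; linear_combination hu₀ x
  calc PTprod (fun x => u₀ x) (fun x => u₀ x)
      = PTprod u₀ (fun x => deriv (deriv ug) x + W x * ug x) := by
        congr 1; funext x; simp only [W]; linear_combination -hug x
    _ = PTprod (fun x => deriv (deriv u₀) x + W x * u₀ x) ug :=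
        PTprod_schrodinger_right_eq_left (by fun_prop) hW_bdd hW_PT u₀ ug
    _ = 0 := by rw [hLu₀]; simp [PTprod]
end

section
/- Let μ₀ ∈ ℝ and let u₀, u_g be Schwartz functions with u₀'' + V·u₀ = -μ₀·u₀ and u_g'' + V·u_g + μ₀·u_g = u₀ (a non-diagonal Jordan block at an exceptional point). Then the 2×2 Gram matrix M with entries M₁₁ = ⟨u₀,u₀⟩_PT, M₁₂ = ⟨u₀,u_g⟩_PT, M₂₁ = ⟨u_g,u₀⟩_PT, M₂₂ = ⟨u_g,u_g⟩_PT satisfies M₁₁ = 0 and det M = -|⟨u₀,u_g⟩_PT|²; in particular, if ⟨u₀,u_g⟩_PT ≠ 0 then det M < 0. -/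
/-! The PT-product is conjugate symmetric, and `L = d²/dx² + V` is symmetric for it on Schwartz
functions: the derivative term by integrating by parts twice (the reflection `x ↦ -x` cancels the
sign of each integration by parts), the potential term pointwise from `conj (V (-x)) = V x`.
For real `μ₀` this gives `⟨u₀,u₀⟩ = ⟨u₀,(L+μ₀)u_g⟩ = ⟨(L+μ₀)u₀,u_g⟩ = 0`, and then
`det M = -⟨u₀,u_g⟩⟨u_g,u₀⟩ = -|⟨u₀,u_g⟩|²`. -/

open MeasureTheory Complex

open ComplexConjugate
open scoped SchwartzMap

namespace PTprod

lemma conj_symm (f g : ℝ → ℂ) : PTprod g f = conj (PTprod f g) := by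
  rw [PTprod, PTprod, ← integral_conj, ← integral_neg_eq_self]
  simp [mul_comm]

lemma integrable_integrand {f g : ℝ → ℂ} {C : ℝ} (hf : Continuous f) (hC : ∀ x, ‖f x‖ ≤ C)
    (hg : Integrable g) : Integrable (fun x => conj (f (-x)) * g x) :=
  hg.bdd_mul (by fun_prop) (ae_of_all _ fun x => by simpa using hC (-x))

lemma add_right {f g₁ g₂ : ℝ → ℂ} (h₁ : Integrable (fun x => conj (f (-x)) * g₁ x))
    (h₂ : Integrable (fun x => conj (f (-x)) * g₂ x)) :
    PTprod f (g₁ + g₂) = PTprod f g₁ + PTprod f g₂ := by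
  simp only [PTprod, Pi.add_apply, mul_add]
  exact integral_add h₁ h₂

lemma add_left {f₁ f₂ g : ℝ → ℂ} (h₁ : Integrable (fun x => conj (f₁ (-x)) * g x))
    (h₂ : Integrable (fun x => conj (f₂ (-x)) * g x)) :
    PTprod (f₁ + f₂) g = PTprod f₁ g + PTprod f₂ g := by
  simp only [PTprod, Pi.add_apply, map_add, add_mul]
  exact integral_add h₁ h₂

lemma const_mul_left (c : ℂ) (f g : ℝ → ℂ) :
    PTprod (fun x => c * f x) g = conj c * PTprod f g := by
  simp only [PTprod, map_mul, mul_assoc]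
  exact integral_const_mul _ _

lemma const_mul_right (c : ℂ) (f g : ℝ → ℂ) :
    PTprod f (fun x => c * g x) = c * PTprod f g := by
  simp only [PTprod, mul_left_comm _ c]
  exact integral_const_mul _ _

lemma mul_left_eq_mul_right {V : ℝ → ℂ} (hV : ∀ x, conj (V (-x)) = V x) (f g : ℝ → ℂ) :
    PTprod (fun x => V x * f x) g = PTprod f (fun x => V x * g x) := by
  simp only [PTprod, map_mul, hV]
  congr 1 with x
  ring

end PTprod

lemma hasDerivAt_conj_comp_neg {f : ℝ → ℂ} {f' : ℂ} {x : ℝ} (hf : HasDerivAt f f' (-x)) :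
    HasDerivAt (fun y => conj (f (-y))) (-conj f') x := by
  simpa using (hf.scomp x (hasDerivAt_neg x)).star

noncomputable def schrodinger (V f : ℝ → ℂ) : ℝ → ℂ :=
  fun x => deriv (deriv f) x + V x * f x

namespace SchwartzMap

lemma integrable_PTprod_integrand (f : 𝓢(ℝ, ℂ)) {g : ℝ → ℂ} (hg : Integrable g) :
    Integrable (fun x => conj (f (-x)) * g x) :=
  PTprod.integrable_integrand f.continuous (norm_le_seminorm ℝ f) hg

lemma PTprod_deriv_left (f g : 𝓢(ℝ, ℂ)) : PTprod (deriv f) g = PTprod f (deriv g) := by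
  have hibp := integral_mul_deriv_eq_deriv_mul_of_integrable
    (u := fun x => conj (f (-x))) (u' := fun x => -conj (deriv f (-x))) (v := g)
    (fun x _ => hasDerivAt_conj_comp_neg (f.hasDerivAt (-x))) (fun x _ => g.hasDerivAt x)
    (f.integrable_PTprod_integrand (derivCLM ℝ ℂ g).integrable)
    (((derivCLM ℝ ℂ f).integrable_PTprod_integrand g.integrable).neg.congr
      (.of_forall fun _ => (neg_mul _ _).symm))
    (f.integrable_PTprod_integrand g.integrable)
  simp only [neg_mul, integral_neg, neg_neg] at hibp
  exact hibp.symm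

lemma PTprod_deriv_deriv_left (f g : 𝓢(ℝ, ℂ)) :
    PTprod (deriv (deriv f)) g = PTprod f (deriv (deriv g)) :=
  (PTprod_deriv_left (derivCLM ℝ ℂ f) g).trans (PTprod_deriv_left f (derivCLM ℝ ℂ g))

variable {V : ℝ → ℂ} {C : ℝ}

lemma integrable_schrodinger (hV : Continuous V) (hVbdd : ∀ x, ‖V x‖ ≤ C)
    (g : 𝓢(ℝ, ℂ)) : Integrable (schrodinger V g) :=
  (derivCLM ℝ ℂ (derivCLM ℝ ℂ g)).integrable.add
    (g.integrable.bdd_mul hV.aestronglyMeasurable (ae_of_all _ hVbdd))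

lemma PTprod_schrodinger_left (hV : Continuous V) (hVbdd : ∀ x, ‖V x‖ ≤ C)
    (hVPT : ∀ x, conj (V (-x)) = V x) (f g : 𝓢(ℝ, ℂ)) :
    PTprod (schrodinger V f) g = PTprod f (schrodinger V g) := by
  have hVf : Continuous fun x => V x * f x := hV.mul f.continuous
  have hVf_le (x : ℝ) : ‖V x * f x‖ ≤ C * SchwartzMap.seminorm ℝ 0 0 f := by
    rw [norm_mul]
    exact mul_le_mul (hVbdd x) (f.norm_le_seminorm ℝ x) (norm_nonneg _)
      ((norm_nonneg _).trans (hVbdd 0))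
  calc PTprod (schrodinger V f) g
      = PTprod (deriv (deriv f)) g + PTprod (fun x => V x * f x) g :=
        PTprod.add_left ((derivCLM ℝ ℂ (derivCLM ℝ ℂ f)).integrable_PTprod_integrand
          g.integrable)
          (PTprod.integrable_integrand hVf hVf_le g.integrable)
    _ = PTprod f (deriv (deriv g)) + PTprod f (fun x => V x * g x) := by
        rw [f.PTprod_deriv_deriv_left, PTprod.mul_left_eq_mul_right hVPT]
    _ = PTprod f (schrodinger V g) :=
        (PTprod.add_right (f.integrable_PTprod_integrand
          (derivCLM ℝ ℂ (derivCLM ℝ ℂ g)).integrable)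
          (f.integrable_PTprod_integrand
            (g.integrable.bdd_mul hV.aestronglyMeasurable (ae_of_all _ hVbdd)))).symm

lemma PTprod_self_eq_zero_of_jordan_chain (hV : Continuous V) (hVbdd : ∀ x, ‖V x‖ ≤ C)
    (hVPT : ∀ x, conj (V (-x)) = V x) {μ : ℝ} {u₀ ug : 𝓢(ℝ, ℂ)}
    (hu₀ : schrodinger V u₀ = fun x => -(μ : ℂ) * u₀ x)
    (hug : schrodinger V ug + (fun x => (μ : ℂ) * ug x) = u₀) :
    PTprod u₀ u₀ = 0 :=
  calc PTprod u₀ u₀ = PTprod u₀ (schrodinger V ug + fun x => (μ : ℂ) * ug x) := by rw [hug]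
    _ = PTprod u₀ (schrodinger V ug) + μ * PTprod u₀ ug := by
        rw [PTprod.add_right (u₀.integrable_PTprod_integrand (integrable_schrodinger hV hVbdd ug))
          (u₀.integrable_PTprod_integrand (ug.integrable.const_mul _)), PTprod.const_mul_right]
    _ = PTprod (schrodinger V u₀) ug + μ * PTprod u₀ ug := by
        rw [PTprod_schrodinger_left hV hVbdd hVPT]
    _ = 0 := by
        rw [hu₀, PTprod.const_mul_left, map_neg, conj_ofReal]
        ring

end SchwartzMap

/-- At a non-diagonal Jordan block of the PT-symmetric Schrödinger operator, the Gram
matrix `M` of `(u₀, u_g)` under the PT-product has `M₁₁ = 0` and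
`det M = -|⟨u₀,u_g⟩_PT|²`; in particular `det M < 0` when `⟨u₀,u_g⟩_PT ≠ 0`. -/
theorem PT_gram_exceptional_point (V : ℝ → ℂ) (hVcont : Continuous V)
    (hVbdd : ∃ C : ℝ, ∀ x : ℝ, ‖V x‖ ≤ C)
    (hVPT : ∀ x : ℝ, (starRingEnd ℂ) (V (-x)) = V x)
    (μ₀ : ℝ) (u₀ ug : SchwartzMap ℝ ℂ)
    (hu₀ : ∀ x : ℝ, deriv (deriv u₀) x + V x * u₀ x = -(μ₀ : ℂ) * u₀ x)
    (hug : ∀ x : ℝ, deriv (deriv ug) x + V x * ug x + (μ₀ : ℂ) * ug x = u₀ x)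
    (M : Matrix (Fin 2) (Fin 2) ℂ)
    (hM : M = !![PTprod (fun x => u₀ x) (fun x => u₀ x),
                 PTprod (fun x => u₀ x) (fun x => ug x);
                 PTprod (fun x => ug x) (fun x => u₀ x),
                 PTprod (fun x => ug x) (fun x => ug x)]) :
    M 0 0 = 0 ∧
      M.det = -((‖PTprod (fun x => u₀ x) (fun x => ug x)‖ : ℂ)) ^ 2 ∧
      (PTprod (fun x => u₀ x) (fun x => ug x) ≠ 0 → (M.det).re < 0) := by
  obtain ⟨C, hC⟩ := hVbdd
  have h00 : PTprod u₀ u₀ = 0 :=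
    SchwartzMap.PTprod_self_eq_zero_of_jordan_chain hVcont hC hVPT (funext hu₀) (funext hug)
  set b := PTprod u₀ ug
  have hdet : M.det = -((‖b‖ : ℂ)) ^ 2 := by
    rw [hM, Matrix.det_fin_two_of, h00, PTprod.conj_symm u₀ ug, mul_conj, ← Complex.sq_norm]
    push_cast
    ring
  refine ⟨by rw [hM]; exact h00, hdet, fun hb => ?_⟩
  rw [hdet, ← ofReal_pow, ← ofReal_neg, ofReal_re, neg_neg_iff_pos]
  exact pow_pos (norm_pos_iff.mpr hb) 2
end
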